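/- arXiv:2405.19269 — 5 statements merged into one kernel-verified Lean document; each statement's English description precedes it below -/
import Mathlib

section
/- Let Φ, G, F be finite nonempty sets, let ℓ̂, ℓ : Φ × G × F → ℝ be functions with ℓ(φ,g,f) ≥ 0 everywhere, let φ* ∈ Φ, and for each f ∈ F let g*_f ∈ G satisfy ℓ(φ*, g*_f, f) = 0. Fix ε ≥ 0 and assume the uniform concentration condition: for all φ ∈ Φ, g ∈ G, f ∈ F, |ℓ(φ,g,f) − (ℓ̂(φ,g,f) − ℓ̂(φ*, g*_f, f))| ≤ (1/2)·ℓ(φ,g,f) + ε. Let φ̂ ∈ Φ be any minimizer over Φ of the min-max-min objective φ ↦ max_{f∈F} ( min_{g∈G} ℓ̂(φ,g,f) − min_{(φ',g')∈Φ×G} ℓ̂(φ',g',f) ), and for each f ∈ F let ĝ_f ∈ G be any minimizer of g ↦ ℓ̂(φ̂, g, f). Then for every f ∈ F one has ℓ(φ̂, ĝ_f, f) ≤ 4ε. -/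
open scoped BigOperators

/-- Deterministic core of the BCRL.C representation-learning guarantee:
the min-max-min empirical solution has small population excess risk
against every discriminator. -/
theorem bcrlc_minmaxmin_guarantee
    {Φ G F : Type*} [Fintype Φ] [Fintype G] [Fintype F]
    [Nonempty Φ] [Nonempty G] [Nonempty F]
    (lhat l : Φ → G → F → ℝ)
    (hl_nonneg : ∀ φ g f, 0 ≤ l φ g f)
    (φstar : Φ) (gstar : F → G)
    (hstar : ∀ f, l φstar (gstar f) f = 0)
    (ε : ℝ) (hε : 0 ≤ ε)
    (hconc : ∀ φ g f,
      |l φ g f - (lhat φ g f - lhat φstar (gstar f) f)|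
        ≤ (1 / 2) * l φ g f + ε)
    (φhat : Φ)
    (hφhat : ∀ φ : Φ,
      (⨆ f : F, ((⨅ g : G, lhat φhat g f) - ⨅ p : Φ × G, lhat p.1 p.2 f))
        ≤ ⨆ f : F, ((⨅ g : G, lhat φ g f) - ⨅ p : Φ × G, lhat p.1 p.2 f))
    (ghat : F → G)
    (hghat : ∀ f g, lhat φhat (ghat f) f ≤ lhat φhat g f) :
    ∀ f : F, l φhat (ghat f) f ≤ 4 * ε := by
  intro f
  have hmin_ge : ∀ f : F, lhat φstar (gstar f) f - ε ≤ ⨅ p : Φ × G, lhat p.1 p.2 f := by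
    intro f
    apply le_ciInf
    intro p
    have h := abs_le.mp (hconc p.1 p.2 f)
    have hl := hl_nonneg p.1 p.2 f
    linarith [h.1, h.2]
  have hsupstar : (⨆ f : F, ((⨅ g : G, lhat φstar g f) - ⨅ p : Φ × G, lhat p.1 p.2 f)) ≤ ε := by
    apply ciSup_le
    intro f
    have h1 : (⨅ g : G, lhat φstar g f) ≤ lhat φstar (gstar f) f :=
      ciInf_le (Set.finite_range _).bddBelow _
    linarith [hmin_ge f]
  have hsup : (⨆ f : F, ((⨅ g : G, lhat φhat g f) - ⨅ p : Φ × G, lhat p.1 p.2 f)) ≤ ε :=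
    (hφhat φstar).trans hsupstar
  have hf : ((⨅ g : G, lhat φhat g f) - ⨅ p : Φ × G, lhat p.1 p.2 f) ≤ ε :=
    le_trans (le_ciSup (f := fun f : F => ((⨅ g : G, lhat φhat g f) - ⨅ p : Φ × G, lhat p.1 p.2 f)) (Set.finite_range _).bddAbove f) hsup
  have hinfg : (⨅ g : G, lhat φhat g f) = lhat φhat (ghat f) f :=
    le_antisymm (ciInf_le (Set.finite_range _).bddBelow _) (le_ciInf (hghat f))
  have hminle : (⨅ p : Φ × G, lhat p.1 p.2 f) ≤ lhat φstar (gstar f) f :=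
    ciInf_le (Set.finite_range _).bddBelow (φstar, gstar f)
  have hc := abs_le.mp (hconc φhat (ghat f) f)
  linarith [hc.1, hc.2]
end

section
/- For every δ ∈ (0, 1/6) there exist a finite metric space (S, d_S), a two-element action set A = {α, β}, and transition probability mass functions P(·|s,a) on S for each (s,a) ∈ S × A satisfying the total-variation Lipschitz condition ‖P(·|s,a) − P(·|s',a')‖_TV ≤ d_S(s,s') + 1{a ≠ a'} for all s, s' ∈ S and a, a' ∈ A, together with states s¹, s², s₊ ∈ S such that d_S(s¹, s²) = δ, P(s₊|sⁱ,a) > 0 for i ∈ {1,2} and a ∈ A, and | P(s₊|s¹,α)/(P(s₊|s¹,α) + P(s₊|s¹,β)) − P(s₊|s²,α)/(P(s₊|s²,α) + P(s₊|s²,β)) | = 1/6 > δ. In particular, the one-step inverse-kinematics regression function (s) ↦ P(s₊|s,α)/Σ_{a∈A} P(s₊|s,a) is not 1-Lipschitz with respect to d_S even though the dynamics are TV-Lipschitz. -/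
/-!
Take three states `s¹ = 0`, `s² = 1`, `s₊ = 2` at pairwise distance `δ`, and let every
state–action pair move to `s₊` with probability `δ` and to state `0` otherwise, except
`(s¹, α)`, which moves to `s₊` with probability `2δ`. Any two transition laws are within
total variation `δ ≤ 1` of each other, so the dynamics are TV-Lipschitz, yet the posterior
probability of `α` given `s₊` is `2/3` from `s¹` and `1/2` from `s²`.
-/

section ScaledDiscreteDist

variable {σ : Type*} [DecidableEq σ] {c : ℝ}

def scaledDiscreteDist (c : ℝ) (x y : σ) : ℝ := if x = y then 0 else c

@[simp]
lemma scaledDiscreteDist_self (x : σ) : scaledDiscreteDist c x x = 0 := if_pos rfl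

lemma scaledDiscreteDist_of_ne {x y : σ} (h : x ≠ y) : scaledDiscreteDist c x y = c :=
  if_neg h

lemma scaledDiscreteDist_nonneg (hc : 0 ≤ c) (x y : σ) : 0 ≤ scaledDiscreteDist c x y := by
  unfold scaledDiscreteDist; split_ifs <;> simp [hc]

lemma eq_of_scaledDiscreteDist_eq_zero (hc : c ≠ 0) {x y : σ}
    (h : scaledDiscreteDist c x y = 0) : x = y := by
  by_contra hxy
  exact hc (by rwa [scaledDiscreteDist_of_ne hxy] at h)

lemma scaledDiscreteDist_comm (x y : σ) : scaledDiscreteDist c x y = scaledDiscreteDist c y x := by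
  simp only [scaledDiscreteDist, eq_comm]

lemma scaledDiscreteDist_triangle (hc : 0 ≤ c) (x y z : σ) :
    scaledDiscreteDist c x z ≤ scaledDiscreteDist c x y + scaledDiscreteDist c y z := by
  by_cases hxz : x = z
  · subst hxz
    simpa using add_nonneg (scaledDiscreteDist_nonneg hc x y) (scaledDiscreteDist_nonneg hc y x)
  · rw [scaledDiscreteDist_of_ne hxz]
    by_cases hxy : x = y
    · subst hxy
      simp [scaledDiscreteDist_of_ne hxz]
    · simpa [scaledDiscreteDist_of_ne hxy] using scaledDiscreteDist_nonneg hc y z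

end ScaledDiscreteDist

section TotalVariation

variable {ι : Type*} [Fintype ι]

noncomputable def tvDist (p q : ι → ℝ) : ℝ := 1 / 2 * ∑ u, |p u - q u|

@[simp]
lemma tvDist_self (p : ι → ℝ) : tvDist p p = 0 := by simp [tvDist]

lemma tvDist_le_scaledDiscreteDist_add {σ α : Type*} [DecidableEq σ] [DecidableEq α]
    {c : ℝ} (hc : c ≤ 1) (P : σ → α → ι → ℝ)
    (hP : ∀ s a s' a', tvDist (P s a) (P s' a') ≤ c) (s s' : σ) (a a' : α) :
    tvDist (P s a) (P s' a') ≤ scaledDiscreteDist c s s' + if a = a' then 0 else 1 := by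
  by_cases hs : s = s'
  · subst hs
    by_cases ha : a = a'
    · subst ha; simp
    · simpa [ha] using (hP s a s a').trans hc
  · rw [scaledDiscreteDist_of_ne hs]
    have : (0 : ℝ) ≤ if a = a' then 0 else 1 := by split_ifs <;> norm_num
    linarith [hP s a s' a']

end TotalVariation

def twoPoint (p : ℝ) : Fin 3 → ℝ := ![1 - p, 0, p]

lemma twoPoint_nonneg {p : ℝ} (h0 : 0 ≤ p) (h1 : p ≤ 1) (u : Fin 3) : 0 ≤ twoPoint p u := by
  fin_cases u <;> simp [twoPoint, h0, h1]

lemma sum_twoPoint (p : ℝ) : ∑ u, twoPoint p u = 1 := by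
  simp [twoPoint, Fin.sum_univ_three]

lemma tvDist_twoPoint (p q : ℝ) : tvDist (twoPoint p) (twoPoint q) = |p - q| := by
  have h0 : twoPoint p 0 - twoPoint q 0 = -(p - q) := by simp [twoPoint]
  have h1 : twoPoint p 1 - twoPoint q 1 = 0 := by simp [twoPoint]
  have h2 : twoPoint p 2 - twoPoint q 2 = p - q := by simp [twoPoint]
  rw [tvDist, Fin.sum_univ_three, h0, h1, h2, abs_neg, abs_zero]
  ring

def escapeProb (δ : ℝ) (s : Fin 3) (a : Bool) : ℝ := if s = 0 ∧ a = true then 2 * δ else δ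

lemma escapeProb_pos {δ : ℝ} (hδ : 0 < δ) (s : Fin 3) (a : Bool) : 0 < escapeProb δ s a := by
  unfold escapeProb; split_ifs <;> linarith

lemma escapeProb_le_one {δ : ℝ} (hδ : δ ≤ 1 / 2) (s : Fin 3) (a : Bool) :
    escapeProb δ s a ≤ 1 := by
  unfold escapeProb; split_ifs <;> linarith

lemma abs_sub_escapeProb_le {δ : ℝ} (hδ : 0 ≤ δ) (s s' : Fin 3) (a a' : Bool) :
    |escapeProb δ s a - escapeProb δ s' a'| ≤ δ := by
  rw [abs_sub_le_iff]
  unfold escapeProb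
  constructor <;> split_ifs <;> linarith

lemma posterior_gap {δ : ℝ} (hδ : δ ≠ 0) : |2 * δ / (2 * δ + δ) - δ / (δ + δ)| = 1 / 6 := by
  rw [show 2 * δ / (2 * δ + δ) - δ / (δ + δ) = 1 / 6 by field_simp; ring]
  norm_num

/-- Actions are `Bool`, with `true = α` and `false = β`. -/
theorem inverse_kinematics_not_lipschitz (δ : ℝ) (hδpos : 0 < δ) (hδlt : δ < 1 / 6) :
    ∃ (n : ℕ) (d : Fin n → Fin n → ℝ) (P : Fin n → Bool → Fin n → ℝ)
      (s1 s2 sp : Fin n),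
      -- (S, d) is a metric space
      (∀ x, d x x = 0) ∧
      (∀ x y, 0 ≤ d x y) ∧
      (∀ x y, d x y = 0 → x = y) ∧
      (∀ x y, d x y = d y x) ∧
      (∀ x y z, d x z ≤ d x y + d y z) ∧
      -- P(·|s,a) is a probability mass function
      (∀ s a u, 0 ≤ P s a u) ∧
      (∀ s a, ∑ u, P s a u = 1) ∧
      -- TV-Lipschitz dynamics
      (∀ s s' : Fin n, ∀ a a' : Bool,
        (1 / 2) * ∑ u, |P s a u - P s' a' u|
          ≤ d s s' + (if a = a' then (0 : ℝ) else 1)) ∧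
      d s1 s2 = δ ∧
      (∀ a, 0 < P s1 a sp) ∧
      (∀ a, 0 < P s2 a sp) ∧
      |P s1 true sp / (P s1 true sp + P s1 false sp)
        - P s2 true sp / (P s2 true sp + P s2 false sp)| = 1 / 6 ∧
      δ < 1 / 6 := by
  have hδ : 0 ≤ δ := hδpos.le
  let P : Fin 3 → Bool → Fin 3 → ℝ := fun s a => twoPoint (escapeProb δ s a)
  have hTV (s : Fin 3) (a : Bool) (s' : Fin 3) (a' : Bool) : tvDist (P s a) (P s' a') ≤ δ := by
    simpa only [P, tvDist_twoPoint] using abs_sub_escapeProb_le hδ s s' a a'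
  refine ⟨3, scaledDiscreteDist δ, P, 0, 1, 2, scaledDiscreteDist_self,
    scaledDiscreteDist_nonneg hδ, fun _ _ => eq_of_scaledDiscreteDist_eq_zero hδpos.ne',
    scaledDiscreteDist_comm, scaledDiscreteDist_triangle hδ,
    fun s a =>
      twoPoint_nonneg (escapeProb_pos hδpos s a).le (escapeProb_le_one (by linarith) s a),
    fun s a => sum_twoPoint _,
    tvDist_le_scaledDiscreteDist_add (by linarith) P hTV,
    scaledDiscreteDist_of_ne (by decide), escapeProb_pos hδpos 0, escapeProb_pos hδpos 1,
    ?_, hδlt⟩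
  simpa [P, twoPoint, escapeProb] using posterior_gap hδpos.ne'
end

section
/- For every δ ∈ (0, 1/6) there exist a finite metric space (S, d_S), a two-element action set A = {α, β}, transition probability mass functions P(·|s,a) on S for each (s,a) ∈ S × A satisfying the total-variation Lipschitz condition ‖P(·|s,a) − P(·|s',a')‖_TV ≤ d_S(s,s') + 1{a ≠ a'} for all s, s' ∈ S and a, a' ∈ A, and states s¹, s², s₊ ∈ S with d_S(s¹, s²) = δ, such that, defining the next-state marginal ρ̃(u) = (1/2)·(P(u|s²,α) + P(u|s²,β)) (the marginal of the next state when starting at s² and playing a uniform action), one has ρ̃(s₊) > 0, P(s₊|sⁱ,α) > 0 for i ∈ {1,2}, and | P(s₊|s¹,α)/(P(s₊|s¹,α) + ρ̃(s₊)) − P(s₊|s²,α)/(P(s₊|s²,α) + ρ̃(s₊)) | = 1/6 > δ. In particular, the optimal population-level contrastive-learning classifier (s) ↦ P(s₊|s,α)/(P(s₊|s,α) + ρ̃(s₊)) is not 1-Lipschitz with respect to d_S even though the dynamics are TV-Lipschitz. -/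
open scoped BigOperators

/-- The optimal population-level contrastive-learning classifier need not be
Lipschitz in the latent state, even under TV-Lipschitz latent dynamics.
Actions are `Bool`, with `true = α` and `false = β`; the next-state marginal
`ρ̃(u) = (1/2)(P(u|s²,α) + P(u|s²,β))` is written inline. -/
theorem contrastive_learning_not_lipschitz (δ : ℝ) (hδpos : 0 < δ) (hδlt : δ < 1 / 6) :
    ∃ (n : ℕ) (d : Fin n → Fin n → ℝ) (P : Fin n → Bool → Fin n → ℝ)
      (s1 s2 sp : Fin n),
      -- (S, d) is a metric space
      (∀ x, d x x = 0) ∧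
      (∀ x y, 0 ≤ d x y) ∧
      (∀ x y, d x y = 0 → x = y) ∧
      (∀ x y, d x y = d y x) ∧
      (∀ x y z, d x z ≤ d x y + d y z) ∧
      -- P(·|s,a) is a probability mass function
      (∀ s a u, 0 ≤ P s a u) ∧
      (∀ s a, ∑ u, P s a u = 1) ∧
      -- TV-Lipschitz dynamics
      (∀ s s' : Fin n, ∀ a a' : Bool,
        (1 / 2) * ∑ u, |P s a u - P s' a' u|
          ≤ d s s' + (if a = a' then (0 : ℝ) else 1)) ∧
      d s1 s2 = δ ∧
      0 < (1 / 2) * (P s2 true sp + P s2 false sp) ∧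
      0 < P s1 true sp ∧
      0 < P s2 true sp ∧
      |P s1 true sp
          / (P s1 true sp + (1 / 2) * (P s2 true sp + P s2 false sp))
        - P s2 true sp
          / (P s2 true sp + (1 / 2) * (P s2 true sp + P s2 false sp))| = 1 / 6 ∧
      δ < 1 / 6 := by
  refine ⟨2, fun x y => if x = y then 0 else δ,
    fun s a u => if s = 0 ∧ a = true then (if u = 0 then 2*δ else 1-2*δ)
      else (if u = 0 then δ else 1-δ), 0, 1, 0, ?_, ?_, ?_, ?_, ?_, ?_, ?_, ?_, ?_, ?_, ?_, ?_, ?_, hδlt⟩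
  · intro x; simp
  · intro x y; dsimp only; split <;> linarith
  · intro x y h; by_contra hne; simp [hne] at h; linarith
  · intro x y; by_cases h : x = y <;> simp [h, eq_comm]
  · intro x y z; dsimp only; split <;> split <;> split <;> first | linarith | (simp_all <;> linarith)
  · intro s a u; dsimp only; split <;> split <;> linarith
  · intro s a; fin_cases s <;> rcases a <;> simp [Fin.sum_univ_two] <;> ring
  · intro s s' a a'
    fin_cases s <;> fin_cases s' <;> rcases a <;> rcases a' <;>
      simp [Fin.sum_univ_two] <;>
      (try rw [show |2*δ - δ| = δ by rw [abs_of_nonneg] <;> linarith]) <;>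
      (try rw [show |1-2*δ - (1-δ)| = δ by rw [abs_of_nonpos] <;> linarith]) <;>
      (try rw [show |δ - 2*δ| = δ by rw [abs_of_nonpos] <;> linarith]) <;>
      (try rw [show |1-δ - (1-2*δ)| = δ by rw [abs_of_nonneg] <;> linarith]) <;>
      linarith
  · simp
  · simp; linarith
  · simp; linarith
  · simp; linarith
  · simp
    have h1 : 2*δ/(2*δ+2⁻¹*(δ+δ)) = 2/3 := by field_simp; ring
    have h2 : δ/(δ+2⁻¹*(δ+δ)) = 2⁻¹ := by field_simp; ring
    rw [h1, h2]; norm_num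
end

section
/- Consider a finite-horizon MDP with horizon H, and for each h ∈ {1,…,H} let ρ_h be a probability measure on X × Act. Let F be a collection of tuples f = (f_1,…,f_H) of bounded measurable functions f_h : X × Act → ℝ (with the convention f_{H+1} = 0) such that for each f ∈ F and each h a measurable greedy policy π_{f,h}(x) ∈ argmax_{a ∈ Act} f_h(x,a) exists; assume the optimal value functions Q* = (Q*_1,…,Q*_H), defined by Q*_{H+1} = 0 and Q*_h = T_h Q*_{h+1}, belong to F, and write π* := π_{Q*}. Suppose C ≥ 0 is a constant such that for all f, g ∈ F: Σ_{h=1}^H ∫ |f_h(x,a) − T_h f_{h+1}(x,a)| d d^{π_g}_h(x,a) ≤ C · Σ_{h=1}^H ( ∫ (f_h(x,a) − T_h f_{h+1}(x,a))² dρ_h(x,a) )^{1/2} (a Bellman transfer coefficient bound for ρ with respect to F). If f ∈ F and ε ≥ 0 satisfy ∫ (f_h(x,a) − T_h f_{h+1}(x,a))² dρ_h(x,a) ≤ ε for every h ∈ {1,…,H}, then the greedy policy π := π_f satisfies J(π*) − J(π) ≤ 2·C·H·√ε. -/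
/-!
Let `σ` be the greedy policy of `f` and `δ_h = f_h - T_h f_{h+1}` its Bellman residuals. Since
`T_h f_{h+1}` integrates `max_a f_{h+1}` against the next-state law, for every policy `π` the sums
of `𝔼_{d^π_h} δ_h` telescope along the trajectory of `π`:
`J(π) = max_a f_1(x₁, a) - Σ_h 𝔼_{d^π_h} δ_h - Σ_h 𝔼 [max_a f_h(x_h, a) - f_h(x_h, π_h x_h)]`.
The last sum is nonnegative, and zero for `π = σ`, so
`J(π*) - J(σ) ≤ Σ_h 𝔼_{d^σ_h} |δ_h| + Σ_h 𝔼_{d^{π*}_h} |δ_h|`, and the transfer coefficient bounds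
each of the two sums by `C · H · √ε`.
-/

open MeasureTheory ProbabilityTheory
open scoped BigOperators

namespace OfflineRLBellmanTransfer

variable {X Act : Type*} [MeasurableSpace X] [MeasurableSpace Act]

/-- The law of the state `x_h` (0-indexed: `x_0 = x₁` is the fixed initial
state, `x_{h+1} ∼ P_h(x_h, π_h(x_h))`). -/
noncomputable def stateDist (P : ℕ → Kernel (X × Act) X) (x1 : X)
    (π : ℕ → X → Act) : ℕ → Measure X
  | 0 => Measure.dirac x1
  | (h + 1) => (stateDist P x1 π h).bind (fun x => P h (x, π h x))

/-- The occupancy measure `d^π_h`: the law of `(x_h, a_h)` with `a_h = π_h(x_h)`. -/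
noncomputable def occupancy (P : ℕ → Kernel (X × Act) X) (x1 : X)
    (π : ℕ → X → Act) (h : ℕ) : Measure (X × Act) :=
  (stateDist P x1 π h).map (fun x => (x, π h x))

/-- Expected return `J(π) = Σ_h ∫ R_h d d^π_h`. -/
noncomputable def ret (P : ℕ → Kernel (X × Act) X) (R : ℕ → X → Act → ℝ)
    (x1 : X) (H : ℕ) (π : ℕ → X → Act) : ℝ :=
  ∑ h ∈ Finset.range H, ∫ p : X × Act, R h p.1 p.2 ∂(occupancy P x1 π h)

/-- The reward Bellman backup `T_h f (x,a) = R_h(x,a) + ∫ sup_a' f(x',a') dP_h(x,a)`. -/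
noncomputable def bellman (P : ℕ → Kernel (X × Act) X) (R : ℕ → X → Act → ℝ)
    (h : ℕ) (f : X → Act → ℝ) : X → Act → ℝ :=
  fun x a => R h x a + ∫ x', (⨆ a', f x' a') ∂(P h (x, a))

theorem _root_.MeasureTheory.Measure.integral_comp {α β E : Type*} [MeasurableSpace α]
    [MeasurableSpace β] [NormedAddCommGroup E] [NormedSpace ℝ E] {μ : Measure α}
    {κ : Kernel α β} {g : β → E}
    (hg : Integrable g (κ ∘ₘ μ)) :
    ∫ y, g y ∂(κ ∘ₘ μ) = ∫ x, ∫ y, g y ∂(κ x) ∂μ := by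
  rw [Measure.comp_eq_comp_const_apply] at hg ⊢
  exact Kernel.integral_comp hg

theorem isProbabilityMeasure_stateDist (P : ℕ → Kernel (X × Act) X)
    [∀ h, IsMarkovKernel (P h)] (x1 : X) {π : ℕ → X → Act} (hπ : ∀ h, Measurable (π h)) :
    ∀ h, IsProbabilityMeasure (stateDist P x1 π h)
  | 0 => Measure.dirac.isProbabilityMeasure
  | h + 1 => by
    have := isProbabilityMeasure_stateDist P x1 hπ h
    let κ : Kernel X X := (P h).comap (fun x => (x, π h x)) (measurable_id.prodMk (hπ h))
    exact inferInstanceAs (IsProbabilityMeasure (κ ∘ₘ stateDist P x1 π h))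

theorem isProbabilityMeasure_occupancy (P : ℕ → Kernel (X × Act) X)
    [∀ h, IsMarkovKernel (P h)] (x1 : X) {π : ℕ → X → Act} (hπ : ∀ h, Measurable (π h))
    (h : ℕ) : IsProbabilityMeasure (occupancy P x1 π h) :=
  have := isProbabilityMeasure_stateDist P x1 hπ h
  Measure.isProbabilityMeasure_map (measurable_id.prodMk (hπ h)).aemeasurable

section
variable {P : ℕ → Kernel (X × Act) X} {x1 : X} {π : ℕ → X → Act} {h : ℕ}

theorem integral_occupancy (hπ : Measurable (π h)) {g : X × Act → ℝ}
    (hg : AEStronglyMeasurable g (occupancy P x1 π h)) :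
    ∫ p, g p ∂(occupancy P x1 π h) = ∫ x, g (x, π h x) ∂(stateDist P x1 π h) :=
  integral_map (measurable_id.prodMk hπ).aemeasurable hg

theorem stateDist_succ (hπ : Measurable (π h)) :
    stateDist P x1 π (h + 1) = P h ∘ₘ occupancy P x1 π h := by
  have he : Measurable fun x => (x, π h x) := measurable_id.prodMk hπ
  ext s hs
  rw [stateDist, occupancy,
    Measure.bind_apply (f := fun x => P h (x, π h x)) hs ((P h).measurable.comp he).aemeasurable,
    Measure.bind_apply hs (P h).aemeasurable, lintegral_map (Kernel.measurable_coe _ hs) he]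

end

theorem _root_.MeasureTheory.Integrable.of_abs_le {α : Type*} [MeasurableSpace α] {μ : Measure α}
    [IsFiniteMeasure μ] {g : α → ℝ} (hg : Measurable g) {B : ℝ} (hB : ∀ x, |g x| ≤ B) :
    Integrable g μ :=
  .of_bound hg.aestronglyMeasurable B (ae_of_all _ hB)

theorem measurable_along_policy {g : X → Act → ℝ}
    (hg : Measurable (fun p : X × Act => g p.1 p.2)) {π : X → Act} (hπ : Measurable π) :
    Measurable fun x => g x (π x) :=
  hg.comp (measurable_id.prodMk hπ)

theorem bellman_eq_of_greedy (P : ℕ → Kernel (X × Act) X) (R : ℕ → X → Act → ℝ) (h : ℕ)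
    {g : X → Act → ℝ} {σ : X → Act} (hσ : ∀ x a, g x a ≤ g x (σ x))
    (x : X) (a : Act) :
    bellman P R h g x a = R h x a + ∫ x', g x' (σ x') ∂(P h (x, a)) := by
  have hsup (x' : X) : ⨆ a', g x' a' = g x' (σ x') :=
    have : Nonempty Act := ⟨a⟩
    ciSup_eq_of_forall_le_of_forall_lt_exists_gt (hσ x') fun _ hw => ⟨σ x', hw⟩
  simp only [bellman, hsup]

section
variable {P : ℕ → Kernel (X × Act) X} [∀ h, IsMarkovKernel (P h)] {R : ℕ → X → Act → ℝ}
  {x1 : X} {f : ℕ → X → Act → ℝ} {σ π : ℕ → X → Act} {K B : ℝ}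

theorem integral_residual_occupancy
    (hRmeas : ∀ h, Measurable (fun p : X × Act => R h p.1 p.2)) (hR : ∀ h x a, |R h x a| ≤ K)
    (hfmeas : ∀ h, Measurable (fun p : X × Act => f h p.1 p.2)) (hf : ∀ h x a, |f h x a| ≤ B)
    (hσ : ∀ h, Measurable (σ h)) (hgreedy : ∀ h x a, f h x a ≤ f h x (σ h x))
    (hπ : ∀ h, Measurable (π h)) (h : ℕ) :
    ∫ p, (f h p.1 p.2 - bellman P R h (f (h + 1)) p.1 p.2) ∂(occupancy P x1 π h)
      = ∫ x, f h x (π h x) ∂(stateDist P x1 π h) - ∫ p, R h p.1 p.2 ∂(occupancy P x1 π h)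
        - ∫ x, f (h + 1) x (σ (h + 1) x) ∂(stateDist P x1 π (h + 1)) := by
  have := isProbabilityMeasure_stateDist P x1 hπ (h + 1)
  have := isProbabilityMeasure_occupancy P x1 hπ h
  simp only [bellman_eq_of_greedy P R h (hgreedy (h + 1)), Prod.mk.eta]
  set V : X → ℝ := fun x => f (h + 1) x (σ (h + 1) x)
  have hV : Measurable V := measurable_along_policy (hfmeas (h + 1)) (hσ (h + 1))
  have hVint : Integrable V (P h ∘ₘ occupancy P x1 π h) := by
    rw [← stateDist_succ (hπ h)]
    exact .of_abs_le hV fun x => hf _ _ _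
  have hfint : Integrable (fun p : X × Act => f h p.1 p.2) (occupancy P x1 π h) :=
    .of_abs_le (hfmeas h) fun p => hf _ _ _
  have hRint : Integrable (fun p : X × Act => R h p.1 p.2) (occupancy P x1 π h) :=
    .of_abs_le (hRmeas h) fun p => hR _ _ _
  have hGint : Integrable (fun p => ∫ x', V x' ∂(P h p)) (occupancy P x1 π h) := by
    refine .of_abs_le (B := B) (hV.stronglyMeasurable.integral_kernel).measurable fun p => ?_
    simpa using norm_integral_le_of_norm_le_const (μ := P h p) (f := V)
      (ae_of_all _ fun x => hf (h + 1) x (σ (h + 1) x))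
  have hRGint : Integrable (fun p => R h p.1 p.2 + ∫ x', V x' ∂(P h p)) (occupancy P x1 π h) :=
    hRint.add hGint
  rw [integral_sub hfint hRGint, integral_add hRint hGint,
    integral_occupancy (hπ h) (hfmeas h).aestronglyMeasurable, stateDist_succ (hπ h),
    Measure.integral_comp hVint]
  ring

theorem ret_eq_value_sub_residuals_sub_gaps
    (hRmeas : ∀ h, Measurable (fun p : X × Act => R h p.1 p.2)) (hR : ∀ h x a, |R h x a| ≤ K)
    (hfmeas : ∀ h, Measurable (fun p : X × Act => f h p.1 p.2)) (hf : ∀ h x a, |f h x a| ≤ B)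
    (hσ : ∀ h, Measurable (σ h)) (hgreedy : ∀ h x a, f h x a ≤ f h x (σ h x))
    (hπ : ∀ h, Measurable (π h)) {H : ℕ} (hfH : f H = 0) :
    ret P R x1 H π = f 0 x1 (σ 0 x1)
      - ∑ h ∈ Finset.range H,
          ∫ p, (f h p.1 p.2 - bellman P R h (f (h + 1)) p.1 p.2) ∂(occupancy P x1 π h)
      - ∑ h ∈ Finset.range H,
          ∫ x, (f h x (σ h x) - f h x (π h x)) ∂(stateDist P x1 π h) := by
  set W : ℕ → ℝ := fun h => ∫ x, f h x (σ h x) ∂(stateDist P x1 π h)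
  have hstep (h : ℕ) : ∫ p, R h p.1 p.2 ∂(occupancy P x1 π h) = (W h - W (h + 1))
      - ∫ p, (f h p.1 p.2 - bellman P R h (f (h + 1)) p.1 p.2) ∂(occupancy P x1 π h)
      - ∫ x, (f h x (σ h x) - f h x (π h x)) ∂(stateDist P x1 π h) := by
    have := isProbabilityMeasure_stateDist P x1 hπ h
    rw [integral_residual_occupancy hRmeas hR hfmeas hf hσ hgreedy hπ h,
      integral_sub (.of_abs_le (measurable_along_policy (hfmeas h) (hσ h)) fun x => hf _ _ _)
        (.of_abs_le (measurable_along_policy (hfmeas h) (hπ h)) fun x => hf _ _ _)]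
    ring
  have hW0 : W 0 = f 0 x1 (σ 0 x1) :=
    integral_dirac' _ _ (measurable_along_policy (hfmeas 0) (hσ 0)).stronglyMeasurable
  have hWH : W H = 0 := by simp [W, hfH]
  rw [ret, Finset.sum_congr rfl fun h _ => hstep h, Finset.sum_sub_distrib,
    Finset.sum_sub_distrib, Finset.sum_range_sub', hW0, hWH, sub_zero]

theorem ret_sub_ret_greedy_le
    (hRmeas : ∀ h, Measurable (fun p : X × Act => R h p.1 p.2)) (hR : ∀ h x a, |R h x a| ≤ K)
    (hfmeas : ∀ h, Measurable (fun p : X × Act => f h p.1 p.2)) (hf : ∀ h x a, |f h x a| ≤ B)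
    (hσ : ∀ h, Measurable (σ h)) (hgreedy : ∀ h x a, f h x a ≤ f h x (σ h x))
    (hπ : ∀ h, Measurable (π h)) {H : ℕ} (hfH : f H = 0) :
    ret P R x1 H π - ret P R x1 H σ
      ≤ ∑ h ∈ Finset.range H,
          ∫ p, |f h p.1 p.2 - bellman P R h (f (h + 1)) p.1 p.2| ∂(occupancy P x1 σ h)
        + ∑ h ∈ Finset.range H,
          ∫ p, |f h p.1 p.2 - bellman P R h (f (h + 1)) p.1 p.2| ∂(occupancy P x1 π h) := by
  rw [ret_eq_value_sub_residuals_sub_gaps hRmeas hR hfmeas hf hσ hgreedy hπ hfH,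
    ret_eq_value_sub_residuals_sub_gaps hRmeas hR hfmeas hf hσ hgreedy hσ hfH]
  have hgap_nonneg : 0 ≤ ∑ h ∈ Finset.range H,
      ∫ x, (f h x (σ h x) - f h x (π h x)) ∂(stateDist P x1 π h) :=
    Finset.sum_nonneg fun h _ => integral_nonneg fun x => sub_nonneg.2 (hgreedy h x (π h x))
  have hres_σ := Finset.sum_le_sum fun h (_ : h ∈ Finset.range H) =>
    (le_abs_self _).trans (abs_integral_le_integral_abs (μ := occupancy P x1 σ h)
      (f := fun p => f h p.1 p.2 - bellman P R h (f (h + 1)) p.1 p.2))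
  have hres_π := Finset.sum_le_sum fun h (_ : h ∈ Finset.range H) =>
    (neg_le_abs _).trans (abs_integral_le_integral_abs (μ := occupancy P x1 π h)
      (f := fun p => f h p.1 p.2 - bellman P R h (f (h + 1)) p.1 p.2))
  rw [Finset.sum_neg_distrib] at hres_π
  simp only [sub_self, integral_zero, Finset.sum_const_zero, sub_zero]
  linarith

end

theorem sum_sqrt_le_of_le {H : ℕ} {e : ℕ → ℝ} {ε : ℝ} (he : ∀ h < H, e h ≤ ε) :
    ∑ h ∈ Finset.range H, Real.sqrt (e h) ≤ H * Real.sqrt ε := by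
  simpa using Finset.sum_le_card_nsmul _ _ _ fun h hh =>
    Real.sqrt_le_sqrt (he h (Finset.mem_range.1 hh))

/-- Steps are 0-indexed (`h = 0,…,H−1`), and the convention `f_{H+1} = 0` becomes `f H = 0`. -/
theorem offline_rl_bellman_transfer_general
    (H : ℕ)
    (P : ℕ → Kernel (X × Act) X) (hP : ∀ h, IsMarkovKernel (P h))
    (R : ℕ → X → Act → ℝ)
    (hRmeas : ∀ h, Measurable (fun p : X × Act => R h p.1 p.2))
    (hR01 : ∀ h x a, R h x a ∈ Set.Icc (0 : ℝ) 1)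
    (x1 : X)
    (ρ : ℕ → Measure (X × Act))
    (F : Set (ℕ → X → Act → ℝ))
    (hFmeas : ∀ f ∈ F, ∀ h, Measurable (fun p : X × Act => f h p.1 p.2))
    (hFbdd : ∀ f ∈ F, ∃ B : ℝ, ∀ h x a, |f h x a| ≤ B)
    (hF0 : ∀ f ∈ F, f H = 0)
    (πf : (ℕ → X → Act → ℝ) → ℕ → X → Act)
    (hπmeas : ∀ f ∈ F, ∀ h, Measurable (πf f h))
    (hπgreedy : ∀ f ∈ F, ∀ h x a, f h x a ≤ f h x (πf f h x))
    (Qstar : ℕ → X → Act → ℝ)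
    (hQstarF : Qstar ∈ F)
    (C : ℝ) (hC : 0 ≤ C)
    (hBTC : ∀ f ∈ F, ∀ g ∈ F,
      (∑ h ∈ Finset.range H,
        ∫ p : X × Act,
          |f h p.1 p.2 - bellman P R h (f (h + 1)) p.1 p.2|
          ∂(occupancy P x1 (πf g) h))
        ≤ C * ∑ h ∈ Finset.range H,
            Real.sqrt (∫ p : X × Act,
              (f h p.1 p.2 - bellman P R h (f (h + 1)) p.1 p.2) ^ 2 ∂(ρ h)))
    (f : ℕ → X → Act → ℝ) (hf : f ∈ F)
    (ε : ℝ)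
    (hsmall : ∀ h < H,
      (∫ p : X × Act,
        (f h p.1 p.2 - bellman P R h (f (h + 1)) p.1 p.2) ^ 2 ∂(ρ h)) ≤ ε) :
    ret P R x1 H (πf Qstar) - ret P R x1 H (πf f)
      ≤ 2 * C * H * Real.sqrt ε := by
  obtain ⟨B, hB⟩ := hFbdd f hf
  have hR : ∀ h x a, |R h x a| ≤ 1 := fun h x a =>
    abs_le.2 ⟨by linarith [(hR01 h x a).1], (hR01 h x a).2⟩
  have hsqrt := sum_sqrt_le_of_le hsmall
  have := hP
  calc ret P R x1 H (πf Qstar) - ret P R x1 H (πf f)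
      ≤ _ := ret_sub_ret_greedy_le hRmeas hR (hFmeas f hf) hB (hπmeas f hf)
        (hπgreedy f hf) (hπmeas Qstar hQstarF) (hF0 f hf)
    _ ≤ _ := add_le_add (hBTC f hf f hf) (hBTC f hf Qstar hQstarF)
    _ ≤ C * (H * Real.sqrt ε) + C * (H * Real.sqrt ε) := by gcongr
    _ = 2 * C * H * Real.sqrt ε := by ring

/-- Offline RL with the Bellman transfer coefficient: if `f ∈ F` has small
squared Bellman error under the offline distributions `ρ_h`, then its greedy
policy is near-optimal.  Steps are 0-indexed (`h = 0,…,H−1`), and the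
convention `f_{H+1} = 0` becomes `f H = 0`. -/
theorem offline_rl_bellman_transfer
    (H : ℕ) (hH : 0 < H)
    (P : ℕ → Kernel (X × Act) X) (hP : ∀ h, IsMarkovKernel (P h))
    (R : ℕ → X → Act → ℝ)
    (hRmeas : ∀ h, Measurable (fun p : X × Act => R h p.1 p.2))
    (hR01 : ∀ h x a, R h x a ∈ Set.Icc (0 : ℝ) 1)
    (x1 : X)
    (ρ : ℕ → Measure (X × Act)) (hρ : ∀ h, IsProbabilityMeasure (ρ h))
    (F : Set (ℕ → X → Act → ℝ))
    (hFmeas : ∀ f ∈ F, ∀ h, Measurable (fun p : X × Act => f h p.1 p.2))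
    (hFbdd : ∀ f ∈ F, ∃ B : ℝ, ∀ h x a, |f h x a| ≤ B)
    (hF0 : ∀ f ∈ F, f H = 0)
    (πf : (ℕ → X → Act → ℝ) → ℕ → X → Act)
    (hπmeas : ∀ f ∈ F, ∀ h, Measurable (πf f h))
    (hπgreedy : ∀ f ∈ F, ∀ h x a, f h x a ≤ f h x (πf f h x))
    (Qstar : ℕ → X → Act → ℝ)
    (hQstarH : Qstar H = 0)
    (hQstarRec : ∀ h < H, Qstar h = bellman P R h (Qstar (h + 1)))
    (hQstarF : Qstar ∈ F)
    (C : ℝ) (hC : 0 ≤ C)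
    (hBTC : ∀ f ∈ F, ∀ g ∈ F,
      (∑ h ∈ Finset.range H,
        ∫ p : X × Act,
          |f h p.1 p.2 - bellman P R h (f (h + 1)) p.1 p.2|
          ∂(occupancy P x1 (πf g) h))
        ≤ C * ∑ h ∈ Finset.range H,
            Real.sqrt (∫ p : X × Act,
              (f h p.1 p.2 - bellman P R h (f (h + 1)) p.1 p.2) ^ 2 ∂(ρ h)))
    (f : ℕ → X → Act → ℝ) (hf : f ∈ F)
    (ε : ℝ) (hε : 0 ≤ ε)
    (hsmall : ∀ h < H,
      (∫ p : X × Act,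
        (f h p.1 p.2 - bellman P R h (f (h + 1)) p.1 p.2) ^ 2 ∂(ρ h)) ≤ ε) :
    ret P R x1 H (πf Qstar) - ret P R x1 H (πf f)
      ≤ 2 * C * H * Real.sqrt ε :=
  offline_rl_bellman_transfer_general H P hP R hRmeas hR01 x1 ρ F hFmeas hFbdd hF0 πf hπmeas
    hπgreedy Qstar hQstarF C hC hBTC f hf ε hsmall

end OfflineRLBellmanTransfer
end

section
/- Let d and T be positive integers, let λ₀ ≥ 1, and let G_1,…,G_T be symmetric positive semidefinite real d×d matrices each with operator norm at most 1. Define M_0 = λ₀·I_d and M_t = M_{t−1} + G_t for t = 1,…,T. Then Σ_{t=1}^T trace( G_t · M_{t−1}⁻¹ ) ≤ 2·( log det(M_T) − log det(M_0) ). (Each M_t is positive definite, hence invertible.) -/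
/-!
Write `M_{t-1} = S²` with `S` its square root and put `C = S⁻¹ G_t S⁻¹`. Then
`tr (G_t M_{t-1}⁻¹) = tr C` and `det M_t = det M_{t-1} · det (1 + C)`, and `G_t ≤ 1 ≤ M_{t-1}`
in the Loewner order gives `0 ≤ C ≤ 1`. Every eigenvalue `μ ∈ [0, 1]` of `C` satisfies
`μ ≤ 2 log (1 + μ)`, so `tr C ≤ 2 log det (1 + C)`, and the per-step bounds telescope.
-/

open scoped MatrixOrder ComplexOrder
open Finset Matrix

lemma Real.sub_one_le_two_mul_log {x : ℝ} (h1 : 1 ≤ x) (h2 : x ≤ 2) :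
    x - 1 ≤ 2 * Real.log x := by
  have hx : 0 < x := by linarith
  have hlog := Real.one_sub_inv_le_log_of_pos hx
  have : x - 1 ≤ 2 * (1 - x⁻¹) := by
    rw [mul_sub, mul_one, ← div_eq_mul_inv, le_sub_comm, div_le_iff₀ hx]
    nlinarith
  linarith

lemma Finset.sum_Icc_one_sub_pred {M : Type*} [AddCommGroup M] (f : ℕ → M) (T : ℕ) :
    ∑ t ∈ Icc 1 T, (f t - f (t - 1)) = f T - f 0 := by
  induction T with
  | zero => simp
  | succ T ih => rw [sum_Icc_succ_top (by omega), ih, Nat.add_sub_cancel]; abel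

namespace Matrix

variable {n : Type*} [DecidableEq n]

lemma PosDef.of_one_le {𝕜 : Type*} [RCLike 𝕜] {P : Matrix n n 𝕜} (h : 1 ≤ P) : P.PosDef := by
  simpa using PosDef.one.add_posSemidef (le_iff.mp h)

variable [Fintype n]

lemma le_one_of_norm_toEuclideanLin_le {𝕜 : Type*} [RCLike 𝕜] {A : Matrix n n 𝕜}
    (hA : A.IsHermitian) (h : ∀ v, ‖toEuclideanLin A v‖ ≤ ‖v‖) : A ≤ 1 := by
  rw [le_iff, ← isPositive_toEuclideanLin_iff]
  refine ⟨isSymmetric_toEuclideanLin_iff.mpr (isHermitian_one.sub hA), fun v => ?_⟩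
  have hle : RCLike.re (inner 𝕜 (toEuclideanLin A v) v) ≤ ‖v‖ ^ 2 := calc
    _ ≤ ‖toEuclideanLin A v‖ * ‖v‖ := re_inner_le_norm _ _
    _ ≤ ‖v‖ * ‖v‖ := by gcongr; exact h v
    _ = ‖v‖ ^ 2 := (sq _).symm
  have h1 : toEuclideanLin (1 : Matrix n n 𝕜) v = v := by simp
  rw [map_sub, LinearMap.sub_apply, h1, inner_sub_left, map_sub, inner_self_eq_norm_sq]
  linarith

lemma trace_sub_card_le_two_mul_log_det {D : Matrix n n ℝ} (h1 : 1 ≤ D) (h2 : D ≤ 2) :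
    D.trace - Fintype.card n ≤ 2 * Real.log D.det := by
  have hD : D.IsHermitian := IsSelfAdjoint.of_nonneg (zero_le_one.trans h1)
  have hμ (i : n) : 1 ≤ hD.eigenvalues i ∧ hD.eigenvalues i ≤ 2 :=
    ⟨(CFC.one_le_iff D).mp h1 _ (hD.eigenvalues_mem_spectrum_real i),
      (le_algebraMap_iff_spectrum_le (r := (2 : ℝ))).mp (by rw [map_ofNat]; exact h2) _
        (hD.eigenvalues_mem_spectrum_real i)⟩
  rw [hD.trace_eq_sum_eigenvalues, hD.det_eq_prod_eigenvalues]
  simp only [RCLike.ofReal_real_eq_id, id]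
  rw [Real.log_prod fun i _ => by linarith [(hμ i).1], mul_sum, Fintype.card_eq_sum_ones,
    Nat.cast_sum, Nat.cast_one, ← sum_sub_distrib]
  exact sum_le_sum fun i _ => Real.sub_one_le_two_mul_log (hμ i).1 (hμ i).2

lemma trace_mul_inv_le_two_mul_log_det_add {P B : Matrix n n ℝ} (hP : P.PosDef) (hB : 0 ≤ B)
    (hBP : B ≤ P) : (B * P⁻¹).trace ≤ 2 * (Real.log (P + B).det - Real.log P.det) := by
  set S := CFC.sqrt P
  have hSS : S * S = P := CFC.sqrt_mul_sqrt_self P hP.posSemidef.nonneg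
  have hS : IsUnit S.det := (isUnit_iff_isUnit_det S).mp <|
    (CFC.isUnit_sqrt_iff P hP.posSemidef.nonneg).mpr hP.isUnit
  have hSi : IsSelfAdjoint S⁻¹ := IsHermitian.inv (IsSelfAdjoint.of_nonneg (CFC.sqrt_nonneg P))
  set C := S⁻¹ * B * S⁻¹
  have hC : 0 ≤ C := hSi.conjugate_nonneg hB
  have hC1 : C ≤ 1 := calc
    C ≤ S⁻¹ * P * S⁻¹ := hSi.conjugate_le_conjugate hBP
    _ = 1 := by
      rw [← hSS, show S⁻¹ * (S * S) * S⁻¹ = (S⁻¹ * S) * (S * S⁻¹) by noncomm_ring,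
        mul_nonsing_inv S hS, nonsing_inv_mul S hS, one_mul]
  have htr : (B * P⁻¹).trace = C.trace := by
    rw [← hSS, mul_inv_rev, ← mul_assoc, trace_mul_comm]
    simp only [C, mul_assoc]
  have hPB : P + B = S * (1 + C) * S := by
    rw [← hSS]
    simp only [C, mul_add, add_mul, mul_one]
    rw [show S * (S⁻¹ * B * S⁻¹) * S = (S * S⁻¹) * B * (S⁻¹ * S) by noncomm_ring,
      mul_nonsing_inv S hS, nonsing_inv_mul S hS, one_mul, mul_one]
  have hdet : (P + B).det = P.det * (1 + C).det := by
    rw [hPB, ← hSS, det_mul, det_mul, det_mul]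
    ring
  have hlogdet := trace_sub_card_le_two_mul_log_det (le_add_of_nonneg_right hC)
    (by rw [← one_add_one_eq_two]; exact add_le_add_right hC1 1)
  rw [trace_add, trace_one] at hlogdet
  have hdet_pos : 0 < (1 + C).det := (PosDef.one.add_posSemidef hC.posSemidef).det_pos
  rw [hdet, Real.log_mul hP.det_pos.ne' hdet_pos.ne', htr]
  linarith

end Matrix

theorem trace_sum_le_two_logdet_general
    (d T : ℕ)
    (lam0 : ℝ) (hlam0 : 1 ≤ lam0)
    (G : ℕ → Matrix (Fin d) (Fin d) ℝ)
    (hpsd : ∀ t ∈ Finset.Icc 1 T, (G t).PosSemidef)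
    (hop : ∀ t ∈ Finset.Icc 1 T, ∀ v : EuclideanSpace ℝ (Fin d),
      ‖Matrix.toEuclideanLin (G t) v‖ ≤ ‖v‖)
    (M : ℕ → Matrix (Fin d) (Fin d) ℝ)
    (hM0 : M 0 = lam0 • (1 : Matrix (Fin d) (Fin d) ℝ))
    (hMrec : ∀ t < T, M (t + 1) = M t + G (t + 1)) :
    ∑ t ∈ Finset.Icc 1 T, Matrix.trace (G t * (M (t - 1))⁻¹)
      ≤ 2 * (Real.log (M T).det - Real.log (M 0).det) := by
  have hM_ge_one : ∀ t ≤ T, 1 ≤ M t := by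
    intro t
    induction t with
    | zero =>
      intro _
      rw [hM0, le_iff, show lam0 • (1 : Matrix (Fin d) (Fin d) ℝ) - 1 = (lam0 - 1) • 1 by
        rw [sub_smul, one_smul]]
      exact PosSemidef.one.smul (sub_nonneg.mpr hlam0)
    | succ t ih =>
      intro ht
      rw [hMrec t ht]
      exact (ih (by omega)).trans (le_add_of_nonneg_right (hpsd _ (by simp [ht])).nonneg)
  calc ∑ t ∈ Icc 1 T, (G t * (M (t - 1))⁻¹).trace
      ≤ ∑ t ∈ Icc 1 T, 2 * (Real.log (M t).det - Real.log (M (t - 1)).det) := by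
        refine sum_le_sum fun t ht => ?_
        obtain ⟨ht1, htT⟩ := mem_Icc.mp ht
        have hM_prev := hM_ge_one (t - 1) (by omega)
        have hM_succ : M t = M (t - 1) + G t := by
          simpa [Nat.sub_add_cancel ht1] using hMrec (t - 1) (by omega)
        rw [hM_succ]
        exact trace_mul_inv_le_two_mul_log_det_add (PosDef.of_one_le hM_prev) (hpsd t ht).nonneg
          ((le_one_of_norm_toEuclideanLin_le (hpsd t ht).isHermitian (hop t ht)).trans hM_prev)
    _ = 2 * (Real.log (M T).det - Real.log (M 0).det) := by
      rw [← mul_sum, sum_Icc_one_sub_pred fun t => Real.log (M t).det]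

/-- Matrix elliptic-potential inequality: for symmetric PSD increments of
operator norm at most 1 added to `M_0 = λ₀·I` with `λ₀ ≥ 1`, the sum of
`trace(G_t M_{t−1}⁻¹)` is bounded by twice the log-determinant increase. -/
theorem trace_sum_le_two_logdet
    (d T : ℕ) (hd : 0 < d) (hT : 0 < T)
    (lam0 : ℝ) (hlam0 : 1 ≤ lam0)
    (G : ℕ → Matrix (Fin d) (Fin d) ℝ)
    (hpsd : ∀ t ∈ Finset.Icc 1 T, (G t).PosSemidef)
    (hop : ∀ t ∈ Finset.Icc 1 T, ∀ v : EuclideanSpace ℝ (Fin d),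
      ‖Matrix.toEuclideanLin (G t) v‖ ≤ ‖v‖)
    (M : ℕ → Matrix (Fin d) (Fin d) ℝ)
    (hM0 : M 0 = lam0 • (1 : Matrix (Fin d) (Fin d) ℝ))
    (hMrec : ∀ t < T, M (t + 1) = M t + G (t + 1)) :
    ∑ t ∈ Finset.Icc 1 T, Matrix.trace (G t * (M (t - 1))⁻¹)
      ≤ 2 * (Real.log (M T).det - Real.log (M 0).det) :=
  trace_sum_le_two_logdet_general d T lam0 hlam0 G hpsd hop M hM0 hMrec
end
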